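/- Let α = exp(2πi/3) and let ζ ∈ ℂ with ζ ≠ 0 and 0 ≤ arg ζ ≤ π/3. Define R(x,y;ζ) = (i/3)·(e^{iζ(x−y)}/ζ² + e^{iαζ(x−y)}/(αζ)²) for x ≥ y, and R(x,y;ζ) = −(i/3)·e^{iα²ζ(x−y)}/(α²ζ)² for x < y. Let f : ℝ → ℂ be measurable with ∫_ℝ (1+y²)|f(y)| dy < ∞, ∫_ℝ f(y) dy = 0 and ∫_ℝ y·f(y) dy = 0. Then for every x ∈ ℝ the integral ∫_ℝ R(x,y;ζ)f(y) dy converges absolutely and |∫_ℝ R(x,y;ζ)·f(y) dy| ≤ (2/3)·∫_ℝ (x−y)²·|f(y)| dy; in particular this bound is uniform in ζ throughout the sector. -/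

import Mathlib

/-!
Along the diagonal the kernel agrees to first order with the affine function
`a + b (x - y)`, where `a = -iα²/(3ζ²)` and `b = α/(3ζ)`; this uses `1 + α + α² = 0`. The
remainder is a combination of the second-order Taylor remainders `e^w - 1 - w` at the exponents
`w` occurring in `R`, and the sector condition `0 ≤ arg ζ ≤ π/3` is exactly what makes
`Re w ≤ 0` for each of them on its half-line. For such `w`, `|e^w - 1 - w| ≤ |w|²`, which bounds
the remainder by `(2/3)(x - y)²`. The vanishing zeroth and first moments of `f` annihilate the
affine part.
-/

open Complex MeasureTheory

/-- The integral kernel of the resolvent of `(−i d/dx)³` at `z = ζ³`. -/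
noncomputable def Rker (α ζ : ℂ) (x y : ℝ) : ℂ :=
  if y ≤ x then
    (Complex.I / 3) * (Complex.exp (Complex.I * ζ * (x - y)) / ζ ^ 2
      + Complex.exp (Complex.I * α * ζ * (x - y)) / (α * ζ) ^ 2)
  else
    -(Complex.I / 3) * Complex.exp (Complex.I * α ^ 2 * ζ * (x - y)) / (α ^ 2 * ζ) ^ 2

theorem norm_exp_sub_one_le_of_re_nonpos {w : ℂ} (hw : w.re ≤ 0) : ‖exp w - 1‖ ≤ ‖w‖ := by
  have hderiv (u : ℝ) : HasDerivAt (fun u : ℝ => exp (u * w)) (w * exp (u * w)) u := by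
    simpa [mul_comm] using ((hasDerivAt_id u).ofReal_comp.mul_const w).cexp
  have hbound (u : ℝ) (hu : u ∈ Set.Icc (0 : ℝ) 1) : ‖w * exp (u * w)‖ ≤ ‖w‖ := by
    rw [norm_mul, norm_exp, re_ofReal_mul]
    exact mul_le_of_le_one_right (norm_nonneg w)
      (Real.exp_le_one_iff.2 (mul_nonpos_of_nonneg_of_nonpos hu.1 hw))
  simpa using (convex_Icc (0 : ℝ) 1).norm_image_sub_le_of_norm_hasDerivWithin_le
    (fun u _ => (hderiv u).hasDerivWithinAt) hbound
    (Set.left_mem_Icc.2 zero_le_one) (Set.right_mem_Icc.2 zero_le_one)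

theorem norm_exp_sub_one_sub_le_of_re_nonpos {w : ℂ} (hw : w.re ≤ 0) :
    ‖exp w - 1 - w‖ ≤ ‖w‖ ^ 2 := by
  have hderiv (u : ℝ) : HasDerivAt (fun u : ℝ => exp (u * w) - 1 - u * w)
      (w * (exp (u * w) - 1)) u := by
    have hlin : HasDerivAt (fun u : ℝ => (u : ℂ) * w) w u := by
      simpa using (hasDerivAt_id u).ofReal_comp.mul_const w
    exact ((hlin.cexp.sub_const 1).sub hlin).congr_deriv (by ring)
  have hbound (u : ℝ) (hu : u ∈ Set.Icc (0 : ℝ) 1) : ‖w * (exp (u * w) - 1)‖ ≤ ‖w‖ ^ 2 := by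
    have hre : ((u : ℂ) * w).re ≤ 0 := by
      rw [re_ofReal_mul]; exact mul_nonpos_of_nonneg_of_nonpos hu.1 hw
    calc ‖w * (exp (u * w) - 1)‖ ≤ ‖w‖ * ‖(u : ℂ) * w‖ := by
          rw [norm_mul]; gcongr; exact norm_exp_sub_one_le_of_re_nonpos hre
      _ = ‖w‖ ^ 2 * u := by rw [norm_mul, norm_real, Real.norm_of_nonneg hu.1]; ring
      _ ≤ ‖w‖ ^ 2 := mul_le_of_le_one_right (sq_nonneg _) hu.2
  simpa using (convex_Icc (0 : ℝ) 1).norm_image_sub_le_of_norm_hasDerivWithin_le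
    (fun u _ => (hderiv u).hasDerivWithinAt) hbound
    (Set.left_mem_Icc.2 zero_le_one) (Set.right_mem_Icc.2 zero_le_one)

theorem norm_exp_I_mul_sub_le {ω : ℂ} {t : ℝ} (h : 0 ≤ ω.im * t) :
    ‖exp (I * ω * t) - 1 - I * ω * t‖ ≤ ‖ω‖ ^ 2 * t ^ 2 := by
  have hre : (I * ω * t).re ≤ 0 := by simpa using h
  calc _ ≤ ‖I * ω * t‖ ^ 2 := norm_exp_sub_one_sub_le_of_re_nonpos hre
    _ = ‖ω‖ ^ 2 * t ^ 2 := by simp [mul_pow]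

theorem im_exp_mul_I_mul (φ : ℝ) (ζ : ℂ) :
    (exp (φ * I) * ζ).im = ‖ζ‖ * Real.sin (φ + ζ.arg) := by
  conv_lhs => rw [← norm_mul_exp_arg_mul_I ζ, mul_left_comm, ← exp_add, ← add_mul,
    ← ofReal_add, im_ofReal_mul, exp_ofReal_mul_I_im]

theorem IsPrimitiveRoot.one_add_add_sq_eq_zero {R : Type*} [CommRing R] [IsDomain R] {α : R}
    (hα : IsPrimitiveRoot α 3) : 1 + α + α ^ 2 = 0 := by
  simpa [Finset.sum_range_succ] using hα.geom_sum_eq_zero (by norm_num)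

section Kernel

variable {α ζ : ℂ} {x y : ℝ}

theorem Rker_sub_affine_of_le (hα : IsPrimitiveRoot α 3) (hζ : ζ ≠ 0) (h : y ≤ x) :
    Rker α ζ x y - (-(I * α ^ 2) / (3 * ζ ^ 2) + α / (3 * ζ) * (x - y)) =
      I / (3 * ζ ^ 2) * ((exp (I * ζ * (x - y)) - 1 - I * ζ * (x - y))
        + α * (exp (I * α * ζ * (x - y)) - 1 - I * α * ζ * (x - y))) := by
  have hα₀ : α ≠ 0 := hα.ne_zero (by norm_num)
  rw [Rker, if_pos h]
  generalize (x : ℂ) - y = t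
  generalize exp (I * ζ * t) = E₁, exp (I * α * ζ * t) = E₂
  field_simp
  linear_combination (-I * E₂ * (α - 1) + I * α ^ 2 - α ^ 2 * ζ * t) * hα.one_add_add_sq_eq_zero
    + (α ^ 2 + α ^ 4) * ζ * t * I_sq

theorem Rker_sub_affine_of_lt (hα : IsPrimitiveRoot α 3) (hζ : ζ ≠ 0) (h : x < y) :
    Rker α ζ x y - (-(I * α ^ 2) / (3 * ζ ^ 2) + α / (3 * ζ) * (x - y)) =
      -(I * α ^ 2) / (3 * ζ ^ 2) *
        (exp (I * α ^ 2 * ζ * (x - y)) - 1 - I * α ^ 2 * ζ * (x - y)) := by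
  have hα₀ : α ≠ 0 := hα.ne_zero (by norm_num)
  rw [Rker, if_neg h.not_ge]
  generalize (x : ℂ) - y = t
  generalize exp (I * α ^ 2 * ζ * t) = E
  field_simp
  linear_combination (I * E * (α ^ 3 + 1) + α ^ 5 * ζ * t) * hα.pow_eq_one - α ^ 8 * ζ * t * I_sq

theorem norm_Rker_sub_affine_le (hα : IsPrimitiveRoot α 3) (hζ : ζ ≠ 0) (h₀ : 0 ≤ ζ.im)
    (h₁ : 0 ≤ (α * ζ).im) (h₂ : (α ^ 2 * ζ).im ≤ 0) (x y : ℝ) :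
    ‖Rker α ζ x y - (-(I * α ^ 2) / (3 * ζ ^ 2) + α / (3 * ζ) * (x - y))‖ ≤
      2 / 3 * (x - y) ^ 2 := by
  have hα₁ : ‖α‖ = 1 := hα.norm'_eq_one (by norm_num)
  have hcast : (x : ℂ) - y = ((x - y : ℝ) : ℂ) := by push_cast; rfl
  rcases le_or_gt y x with h | h
  · have ht : 0 ≤ x - y := sub_nonneg.2 h
    have hE₁ := norm_exp_I_mul_sub_le (ω := ζ) (mul_nonneg h₀ ht)
    have hE₂ := norm_exp_I_mul_sub_le (ω := α * ζ) (mul_nonneg h₁ ht)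
    simp only [← mul_assoc, norm_mul, hα₁, one_mul] at hE₂
    rw [Rker_sub_affine_of_le hα hζ h, hcast]
    calc _ ≤ ‖I / (3 * ζ ^ 2)‖ * (‖ζ‖ ^ 2 * (x - y) ^ 2 + ‖ζ‖ ^ 2 * (x - y) ^ 2) := by
          rw [norm_mul]
          gcongr
          refine (norm_add_le _ _).trans (add_le_add hE₁ ?_)
          rw [norm_mul, hα₁, one_mul]
          exact hE₂
      _ = 2 / 3 * (x - y) ^ 2 := by
          simp only [norm_div, norm_I, norm_mul, norm_ofNat, norm_pow]
          field_simp
          ring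
  · have ht : x - y ≤ 0 := (sub_neg.2 h).le
    have hE := norm_exp_I_mul_sub_le (ω := α ^ 2 * ζ) (mul_nonneg_of_nonpos_of_nonpos h₂ ht)
    simp only [← mul_assoc, norm_mul, norm_pow, hα₁, one_pow, one_mul] at hE
    rw [Rker_sub_affine_of_lt hα hζ h, hcast]
    calc _ ≤ ‖-(I * α ^ 2) / (3 * ζ ^ 2)‖ * (‖ζ‖ ^ 2 * (x - y) ^ 2) := by
          rw [norm_mul]
          gcongr
      _ ≤ 2 / 3 * (x - y) ^ 2 := by
          simp only [norm_div, norm_neg, norm_mul, norm_I, norm_pow, hα₁, one_pow, mul_one,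
            norm_ofNat]
          field_simp
          nlinarith [sq_nonneg (x - y)]

end Kernel

section WeightedL1

variable {f : ℝ → ℂ} (hfm : AEStronglyMeasurable f)
  (hf : Integrable fun y : ℝ => (1 + y ^ 2) * ‖f y‖)
include hfm hf

theorem integrable_of_integrable_one_add_sq_mul_norm : Integrable f :=
  hf.mono' hfm <| ae_of_all _ fun y => le_mul_of_one_le_left (norm_nonneg _)
    (le_add_of_nonneg_right (sq_nonneg y))

theorem integrable_ofReal_mul_of_integrable_one_add_sq_mul_norm :
    Integrable fun y : ℝ => (y : ℂ) * f y := by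
  refine hf.mono' (continuous_ofReal.aestronglyMeasurable.mul hfm) (ae_of_all _ fun y => ?_)
  rw [norm_mul, norm_real, Real.norm_eq_abs]
  have : |y| ≤ 1 + y ^ 2 := by nlinarith [abs_nonneg y, sq_abs y]
  gcongr

theorem integrable_sub_sq_mul_norm_of_integrable_one_add_sq_mul_norm (x : ℝ) :
    Integrable fun y : ℝ => (x - y) ^ 2 * ‖f y‖ := by
  refine (hf.const_mul (2 + 2 * x ^ 2)).mono'
    (((continuous_const.sub continuous_id).pow 2).aestronglyMeasurable.mul hfm.norm)
    (ae_of_all _ fun y => ?_)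
  rw [Real.norm_of_nonneg (by positivity), ← mul_assoc]
  have : (x - y) ^ 2 ≤ (2 + 2 * x ^ 2) * (1 + y ^ 2) := by
    nlinarith [sq_nonneg (x + y), sq_nonneg (x * y)]
  gcongr

theorem integrable_affine_mul_of_integrable_one_add_sq_mul_norm (a b : ℂ) (x : ℝ) :
    Integrable fun y : ℝ => (a + b * (x - y)) * f y :=
  (((integrable_of_integrable_one_add_sq_mul_norm hfm hf).const_mul (a + b * x)).sub
    ((integrable_ofReal_mul_of_integrable_one_add_sq_mul_norm hfm hf).const_mul b)).congr
    (ae_of_all _ fun y => by dsimp only [Pi.sub_apply]; ring)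

theorem integral_affine_mul_eq_zero (h₀ : ∫ y, f y = 0) (h₁ : ∫ y : ℝ, (y : ℂ) * f y = 0)
    (a b : ℂ) (x : ℝ) : ∫ y : ℝ, (a + b * (x - y)) * f y = 0 := by
  have hsplit : (fun y : ℝ => (a + b * (x - y)) * f y) =
      fun y => (a + b * x) * f y - b * ((y : ℂ) * f y) := by
    funext y; ring
  rw [hsplit, integral_sub ((integrable_of_integrable_one_add_sq_mul_norm hfm hf).const_mul _)
    ((integrable_ofReal_mul_of_integrable_one_add_sq_mul_norm hfm hf).const_mul _),
    integral_const_mul, integral_const_mul, h₀, h₁, mul_zero, mul_zero, sub_zero]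

theorem integrable_mul_and_norm_integral_le_of_moments_eq_zero {K : ℝ → ℂ}
    (hK : AEStronglyMeasurable K) (h₀ : ∫ y, f y = 0) (h₁ : ∫ y : ℝ, (y : ℂ) * f y = 0)
    {a b : ℂ} {x c : ℝ} (hKaff : ∀ y : ℝ, ‖K y - (a + b * (x - y))‖ ≤ c * (x - y) ^ 2) :
    Integrable (fun y => K y * f y) ∧
      ‖∫ y, K y * f y‖ ≤ c * ∫ y : ℝ, (x - y) ^ 2 * ‖f y‖ := by
  have hrem_le (y : ℝ) : ‖(K y - (a + b * (x - y))) * f y‖ ≤ c * ((x - y) ^ 2 * ‖f y‖) := by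
    rw [norm_mul, ← mul_assoc]
    exact mul_le_mul_of_nonneg_right (hKaff y) (norm_nonneg _)
  have hsq := (integrable_sub_sq_mul_norm_of_integrable_one_add_sq_mul_norm hfm hf x).const_mul c
  have hrem : Integrable fun y => (K y - (a + b * (x - y))) * f y :=
    hsq.mono' ((hK.sub (by fun_prop)).mul hfm) (ae_of_all _ hrem_le)
  have haff := integrable_affine_mul_of_integrable_one_add_sq_mul_norm hfm hf a b x
  have hsplit : (fun y => K y * f y) =
      fun y => (K y - (a + b * (x - y))) * f y + (a + b * (x - y)) * f y := by
    funext y; ring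
  refine ⟨hsplit ▸ hrem.add haff, ?_⟩
  calc ‖∫ y, K y * f y‖ = ‖∫ y, (K y - (a + b * (x - y))) * f y‖ := by
        rw [hsplit, integral_add hrem haff, integral_affine_mul_eq_zero hfm hf h₀ h₁, add_zero]
    _ ≤ ∫ y, c * ((x - y) ^ 2 * ‖f y‖) := norm_integral_le_of_norm_le hsq (ae_of_all _ hrem_le)
    _ = c * ∫ y : ℝ, (x - y) ^ 2 * ‖f y‖ := integral_const_mul _ _

end WeightedL1

theorem measurable_Rker (α ζ : ℂ) (x : ℝ) : Measurable (Rker α ζ x) :=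
  Measurable.ite (measurableSet_le measurable_id measurable_const) (by fun_prop) (by fun_prop)

/-- for `α = exp(2πi/3)`, `ζ ≠ 0` with `0 ≤ arg ζ ≤ π/3`, and `f` in the
weighted `L¹` space with vanishing zeroth and first moments, for every `x` the integral
`∫ R(x,y;ζ)f(y) dy` converges absolutely and
`|∫ R(x,y;ζ)f(y) dy| ≤ (2/3)∫ (x−y)²|f(y)| dy`, uniformly in `ζ`. -/
theorem stmt18 (α : ℂ) (hα : α = Complex.exp (2 * Real.pi * Complex.I / 3))
    (ζ : ℂ) (hζ : ζ ≠ 0) (harg₀ : 0 ≤ ζ.arg) (harg₁ : ζ.arg ≤ Real.pi / 3)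
    (f : ℝ → ℂ) (hfmeas : Measurable f)
    (hf : Integrable (fun y : ℝ => (1 + y ^ 2) * ‖f y‖))
    (hmom₀ : ∫ y : ℝ, f y = 0)
    (hmom₁ : ∫ y : ℝ, (y : ℂ) * f y = 0) :
    ∀ x : ℝ, Integrable (fun y : ℝ => Rker α ζ x y * f y) ∧
      ‖∫ y : ℝ, Rker α ζ x y * f y‖ ≤
        (2 / 3) * ∫ y : ℝ, (x - y) ^ 2 * ‖f y‖ := by
  have hprim : IsPrimitiveRoot α 3 := by simpa [hα] using isPrimitiveRoot_exp 3 (by norm_num)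
  have hα_exp : α = exp ((2 * Real.pi / 3 : ℝ) * I) := by rw [hα]; push_cast; ring_nf
  have hα_sq : α ^ 2 = exp ((-(2 * Real.pi / 3) : ℝ) * I) := by
    rw [eq_inv_of_mul_eq_one_left (a := α ^ 2) (by rw [← pow_succ]; exact hprim.pow_eq_one),
      hα_exp, ← exp_neg]
    push_cast; ring_nf
  have hπ := Real.pi_pos
  have him₀ : 0 ≤ ζ.im := arg_nonneg_iff.1 harg₀
  have him₁ : 0 ≤ (α * ζ).im := by
    rw [hα_exp, im_exp_mul_I_mul]
    exact mul_nonneg (norm_nonneg _) (Real.sin_nonneg_of_nonneg_of_le_pi (by linarith) (by linarith))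
  have him₂ : (α ^ 2 * ζ).im ≤ 0 := by
    rw [hα_sq, im_exp_mul_I_mul]
    exact mul_nonpos_of_nonneg_of_nonpos (norm_nonneg _)
      (Real.sin_nonpos_of_nonpos_of_neg_pi_le (by linarith) (by linarith))
  intro x
  exact integrable_mul_and_norm_integral_le_of_moments_eq_zero hfmeas.aestronglyMeasurable hf
    (measurable_Rker α ζ x).aestronglyMeasurable hmom₀ hmom₁
    (norm_Rker_sub_affine_le hprim hζ him₀ him₁ him₂ x)
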